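/- arXiv:1611.05998 — 2 statements merged into one kernel-verified Lean document; each statement's English description precedes it below -/
import Mathlib

section
/- There is an absolute constant C > 0 such that the following holds. Let f be a homogeneous polynomial of degree d in n real variables all of whose coefficients are nonnegative, with multilinear components {f_{2α}}. Then for every multi-index α with |α| ≤ d/2, ‖f‖₂ ≥ ‖f_{2α}‖₂ / ( C^d · |𝒪(α)| ). -/
/-!
Test `f` at a well-chosen point of the sphere. Nonnegativity of the coefficients passes to every
component `f_{2α}`, whose coefficients are coefficients of `f` (parity of exponents makes the
decomposition unique), so `|f_{2α}(x)| ≤ f_{2α}(|x|)` and `f_{2α}(y) · y^{2α} ≤ f(y)` for `y ≥ 0`.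
Given `x` on the sphere and `k = |α| > 0`, the point `y` with `y_i² = (x_i² + α_i / k) / 2` lies on
the sphere and satisfies `y ≥ |x| / 2`, so by homogeneity `f_{2α}(y) ≥ 2^{-(d - 2k)} f_{2α}(|x|)`;
moreover `y^{2α} ≥ ∏ (α_i / 2k)^{α_i} ≥ (2e)^{-k} / |𝒪(α)|` because `α_i! ≤ α_i^{α_i}` and
`k^k ≤ e^k k!`. Hence `C = 4` works.
-/

open MvPolynomial

/-- `‖f‖₂ = sup_{‖x‖₂ = 1} |f(x)|` for a polynomial `f` in `n` real variables. -/
noncomputable def sphereNorm {n : ℕ} (f : MvPolynomial (Fin n) ℝ) : ℝ :=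
  sSup {y | ∃ x : Fin n → ℝ, (∑ i, x i ^ 2) = 1 ∧ y = |eval x f|}


/-- A polynomial is multilinear if every variable appears with degree at most 1
in every monomial with nonzero coefficient. -/
def IsMultilinear {n : ℕ} (p : MvPolynomial (Fin n) ℝ) : Prop :=
  ∀ m ∈ p.support, ∀ i, m i ≤ 1

/-- `|α| = Σᵢ αᵢ`, the total degree of the multi-index `α`. -/
def mdeg {n : ℕ} (α : Fin n →₀ ℕ) : ℕ := α.sum fun _ e => e

/-- `g` is the multilinear decomposition of the degree-`d` homogeneous polynomial `f`,
i.e. `f = Σ_{|α| ≤ d/2} g α · x^{2α}` where each `g α` is multilinear and homogeneous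
of degree `d - 2|α|`. -/
def IsMLDecomp {n : ℕ} (d : ℕ) (f : MvPolynomial (Fin n) ℝ)
    (g : (Fin n →₀ ℕ) → MvPolynomial (Fin n) ℝ) : Prop :=
  (∀ α : Fin n →₀ ℕ,
      (mdeg α ≤ d / 2 → IsMultilinear (g α) ∧ (g α).IsHomogeneous (d - 2 * mdeg α)) ∧
      (d / 2 < mdeg α → g α = 0)) ∧
  f = ∑ᶠ α : Fin n →₀ ℕ, g α * monomial (2 • α) (1 : ℝ)

/-- `|𝒪(α)| = |α|! / ∏ᵢ αᵢ!`, the number of tuples corresponding to `α`. -/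
noncomputable def orbitCard {n : ℕ} (α : Fin n →₀ ℕ) : ℝ :=
  (Nat.factorial (mdeg α) : ℝ) / α.prod fun _ e => (Nat.factorial e : ℝ)


section NonnegCoeff

variable {σ : Type*} {p : MvPolynomial σ ℝ}

lemma eval_nonneg_of_coeff_nonneg (hp : ∀ m, 0 ≤ coeff m p) {x : σ → ℝ} (hx : 0 ≤ x) :
    0 ≤ eval x p := by
  rw [eval_eq]
  exact Finset.sum_nonneg fun m _ =>
    mul_nonneg (hp m) (Finset.prod_nonneg fun i _ => pow_nonneg (hx i) _)

lemma eval_le_eval_of_coeff_nonneg (hp : ∀ m, 0 ≤ coeff m p) {x y : σ → ℝ} (hx : 0 ≤ x)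
    (hxy : x ≤ y) : eval x p ≤ eval y p := by
  simp only [eval_eq]
  gcongr with m _ i _
  · exact hp m
  · exact fun i _ => pow_nonneg (hx i) _
  · exact hx i
  · exact hxy i

lemma abs_eval_le_eval_abs (hp : ∀ m, 0 ≤ coeff m p) (x : σ → ℝ) :
    |eval x p| ≤ eval |x| p := by
  simp only [eval_eq]
  refine (Finset.abs_sum_le_sum_abs _ _).trans (le_of_eq (Finset.sum_congr rfl fun m _ => ?_))
  simp [abs_mul, abs_of_nonneg (hp m), Finset.abs_prod]

end NonnegCoeff

lemma MvPolynomial.IsHomogeneous.eval_smul {σ R : Type*} [CommSemiring R] {p : MvPolynomial σ R}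
    {m : ℕ} (hp : p.IsHomogeneous m) (c : R) (x : σ → R) :
    eval (c • x) p = c ^ m * eval x p := by
  simp only [eval_eq, Finset.mul_sum]
  refine Finset.sum_congr rfl fun s hs => ?_
  simp only [Pi.smul_apply, smul_eq_mul, mul_pow, Finset.prod_mul_distrib,
    Finset.prod_pow_eq_pow_sum, ← hp.degree_eq_sum_deg_support hs]
  ring

lemma eval_monomial_two_smul {σ : Type*} [Fintype σ] (y : σ → ℝ) (α : σ →₀ ℕ) :
    eval y (monomial (2 • α) (1 : ℝ)) = ∏ i, (y i ^ 2) ^ α i := by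
  rw [eval_monomial, one_mul, Finsupp.prod_fintype _ _ fun _ => pow_zero _]
  simp [pow_mul]

lemma eval_monomial_two_smul_nonneg {σ : Type*} [Fintype σ] (y : σ → ℝ) (α : σ →₀ ℕ) :
    0 ≤ eval y (monomial (2 • α) (1 : ℝ)) := by
  rw [eval_monomial_two_smul]; positivity

lemma eq_of_add_two_smul_eq {σ : Type*} {β β' α α' : σ →₀ ℕ} (hβ : ∀ i, β i ≤ 1)
    (hβ' : ∀ i, β' i ≤ 1) (h : β + 2 • α = β' + 2 • α') : α = α' := by
  ext i
  have hi := DFunLike.congr_fun h i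
  simp only [Finsupp.add_apply, Finsupp.smul_apply, smul_eq_mul] at hi
  have := hβ i
  have := hβ' i
  omega

lemma mdeg_eq_sum {n : ℕ} (α : Fin n →₀ ℕ) : mdeg α = ∑ i, α i := α.degree_eq_sum

lemma orbitCard_pos {n : ℕ} (α : Fin n →₀ ℕ) : 0 < orbitCard α :=
  div_pos (by positivity) (Finset.prod_pos fun _ _ => by positivity)

lemma inv_orbitCard_le {n : ℕ} (α : Fin n →₀ ℕ) :
    (orbitCard α)⁻¹ ≤ Real.exp (mdeg α) * ∏ i, ((α i : ℝ) / mdeg α) ^ α i := by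
  set k := mdeg α
  have hk : ∑ i, α i = k := (mdeg_eq_sum α).symm
  have hk_pow : (0 : ℝ) < (k : ℝ) ^ k := by exact_mod_cast Nat.pow_self_pos
  rw [orbitCard, Finsupp.prod_fintype _ _ fun _ => by simp, inv_div]
  simp only [div_pow, Finset.prod_div_distrib, Finset.prod_pow_eq_pow_sum, hk]
  calc (∏ i, ((α i).factorial : ℝ)) / k.factorial
      ≤ (∏ i, (α i : ℝ) ^ α i) / k.factorial := by
        gcongr with i
        exact_mod_cast Nat.factorial_le_pow (α i)
    _ = (k : ℝ) ^ k / k.factorial * ((∏ i, (α i : ℝ) ^ α i) / (k : ℝ) ^ k) := by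
        field_simp
    _ ≤ Real.exp k * ((∏ i, (α i : ℝ) ^ α i) / (k : ℝ) ^ k) := by
        gcongr
        exact Real.pow_div_factorial_le_exp _ (Nat.cast_nonneg k) k

section SphereNorm

variable {n : ℕ}

lemma bddAbove_abs_eval_sphere (p : MvPolynomial (Fin n) ℝ) :
    BddAbove {y | ∃ x : Fin n → ℝ, (∑ i, x i ^ 2) = 1 ∧ y = |eval x p|} := by
  set S := {x : Fin n → ℝ | ∑ i, x i ^ 2 = 1}
  have hS : S ⊆ Set.Icc (-1) 1 := fun x hx => by
    have h i : |x i| ≤ 1 := by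
      rw [← sq_le_one_iff_abs_le_one, ← (hx : ∑ i, x i ^ 2 = 1)]
      exact Finset.single_le_sum (fun j _ => sq_nonneg (x j)) (Finset.mem_univ i)
    exact ⟨fun i => (abs_le.1 (h i)).1, fun i => (abs_le.1 (h i)).2⟩
  have hScompact : IsCompact S :=
    isCompact_Icc.of_isClosed_subset (isClosed_eq (by fun_prop) continuous_const) hS
  refine (hScompact.bddAbove_image p.continuous_eval.abs.continuousOn).mono ?_
  rintro _ ⟨x, hx, rfl⟩
  exact ⟨x, hx, rfl⟩

lemma abs_eval_le_sphereNorm (p : MvPolynomial (Fin n) ℝ) {x : Fin n → ℝ}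
    (hx : ∑ i, x i ^ 2 = 1) : |eval x p| ≤ sphereNorm p :=
  le_csSup (bddAbove_abs_eval_sphere p) ⟨x, hx, rfl⟩

lemma sphereNorm_nonneg (p : MvPolynomial (Fin n) ℝ) : 0 ≤ sphereNorm p :=
  Real.sSup_nonneg (by rintro _ ⟨x, -, rfl⟩; exact abs_nonneg _)

lemma sphereNorm_le {p : MvPolynomial (Fin n) ℝ} {C : ℝ} (hC : 0 ≤ C)
    (h : ∀ x : Fin n → ℝ, ∑ i, x i ^ 2 = 1 → |eval x p| ≤ C) : sphereNorm p ≤ C :=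
  Real.sSup_le (by rintro _ ⟨x, hx, rfl⟩; exact h x hx) hC

end SphereNorm

namespace IsMLDecomp

variable {n d : ℕ} {f : MvPolynomial (Fin n) ℝ} {g : (Fin n →₀ ℕ) → MvPolynomial (Fin n) ℝ}

lemma isMultilinear (hD : IsMLDecomp d f g) (α : Fin n →₀ ℕ) : IsMultilinear (g α) := by
  rcases le_or_gt (mdeg α) (d / 2) with hα | hα
  · exact ((hD.1 α).1 hα).1
  · simp [IsMultilinear, (hD.1 α).2 hα]

lemma hasFiniteSupport (hD : IsMLDecomp d f g) :
    (fun α => g α * monomial (2 • α) (1 : ℝ)).HasFiniteSupport := by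
  refine (Finsupp.finite_of_degree_le (d / 2)).subset fun α hα => ?_
  by_contra h
  exact hα (by simp [(hD.1 α).2 (not_le.1 h)])

lemma coeff_add_two_smul (hD : IsMLDecomp d f g) (α : Fin n →₀ ℕ) {β : Fin n →₀ ℕ}
    (hβ : β ∈ (g α).support) : coeff (β + 2 • α) f = coeff β (g α) := by
  rw [hD.2, ← lcoeff_apply, map_finsum _ hD.hasFiniteSupport, finsum_eq_single _ α]
  · simp [coeff_mul_monomial']
  intro α' hne
  rw [lcoeff_apply, coeff_mul_monomial']
  split_ifs with hle
  · rw [mul_one, ← notMem_support_iff]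
    intro hγ
    refine hne (eq_of_add_two_smul_eq (hD.isMultilinear α' _ hγ) (hD.isMultilinear α _ hβ) ?_)
    exact tsub_add_cancel_of_le hle
  · rfl

lemma coeff_nonneg (hD : IsMLDecomp d f g) (hf : ∀ m, 0 ≤ coeff m f) (α : Fin n →₀ ℕ)
    (m : Fin n →₀ ℕ) : 0 ≤ coeff m (g α) := by
  by_cases hm : m ∈ (g α).support
  · exact hD.coeff_add_two_smul α hm ▸ hf _
  · rw [notMem_support_iff.1 hm]

lemma eval_mul_le (hD : IsMLDecomp d f g) (hf : ∀ m, 0 ≤ coeff m f) (α : Fin n →₀ ℕ)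
    {y : Fin n → ℝ} (hy : 0 ≤ y) :
    eval y (g α) * eval y (monomial (2 • α) (1 : ℝ)) ≤ eval y f := by
  rw [hD.2, map_finsum _ hD.hasFiniteSupport, ← map_mul]
  refine single_le_finsum α (hD.hasFiniteSupport.fun_comp (map_zero _)) fun α' => ?_
  rw [map_mul]
  exact mul_nonneg (eval_nonneg_of_coeff_nonneg (hD.coeff_nonneg hf α') hy)
    (eval_monomial_two_smul_nonneg y α')

lemma pow_mul_abs_eval_mul_le_sphereNorm (hD : IsMLDecomp d f g)
    (hf : ∀ m, 0 ≤ coeff m f) {α : Fin n →₀ ℕ} (hα : mdeg α ≤ d / 2) {x y : Fin n → ℝ}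
    (hy : 0 ≤ y) (hy1 : ∑ i, y i ^ 2 = 1) {c : ℝ} (hc : 0 ≤ c) (hxy : c • |x| ≤ y) :
    c ^ (d - 2 * mdeg α) * |eval x (g α)| * eval y (monomial (2 • α) (1 : ℝ)) ≤
      sphereNorm f := by
  have hg := hD.coeff_nonneg hf α
  have hY := eval_monomial_two_smul_nonneg y α
  calc c ^ (d - 2 * mdeg α) * |eval x (g α)| * eval y (monomial (2 • α) (1 : ℝ))
      ≤ c ^ (d - 2 * mdeg α) * eval |x| (g α) * eval y (monomial (2 • α) (1 : ℝ)) := by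
        gcongr; exact abs_eval_le_eval_abs hg x
    _ = eval (c • |x|) (g α) * eval y (monomial (2 • α) (1 : ℝ)) := by
        rw [((hD.1 α).1 hα).2.eval_smul]
    _ ≤ eval y (g α) * eval y (monomial (2 • α) (1 : ℝ)) := by
        gcongr
        exact eval_le_eval_of_coeff_nonneg hg (smul_nonneg hc (abs_nonneg x)) hxy
    _ ≤ eval y f := hD.eval_mul_le hf α hy
    _ ≤ sphereNorm f := (le_abs_self _).trans (abs_eval_le_sphereNorm f hy1)

end IsMLDecomp

lemma exists_sphere_point_inv_orbitCard_le {n : ℕ} (α : Fin n →₀ ℕ) {x : Fin n → ℝ}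
    (hx : ∑ i, x i ^ 2 = 1) :
    ∃ y : Fin n → ℝ, 0 ≤ y ∧ ∑ i, y i ^ 2 = 1 ∧ (1 / 2 : ℝ) • |x| ≤ y ∧
      (orbitCard α)⁻¹ ≤ (2 * Real.exp 1) ^ mdeg α * eval y (monomial (2 • α) (1 : ℝ)) := by
  rcases Nat.eq_zero_or_pos (mdeg α) with hk | hk
  · obtain rfl : α = 0 := (Finsupp.degree_eq_zero_iff α).1 hk
    refine ⟨|x|, abs_nonneg x, by simpa using hx, fun i => ?_, by simp [orbitCard, mdeg]⟩
    simp only [Pi.smul_apply, smul_eq_mul, Pi.abs_apply]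
    linarith [abs_nonneg (x i)]
  set k := mdeg α
  have hk' : (0 : ℝ) < k := Nat.cast_pos.2 hk
  have hαk : ∑ i, α i = k := (mdeg_eq_sum α).symm
  -- the point halfway between `x²` and the maximiser `α / k` of `y ↦ y^α` on the simplex
  set y : Fin n → ℝ := fun i => √((x i ^ 2 + α i / k) / 2)
  have hy2 i : y i ^ 2 = (x i ^ 2 + α i / k) / 2 := Real.sq_sqrt (by positivity)
  refine ⟨y, fun i => Real.sqrt_nonneg _, ?_, fun i => ?_, ?_⟩
  · have hαk' : ∑ i, (α i : ℝ) = k := by exact_mod_cast hαk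
    simp only [hy2, ← Finset.sum_div, Finset.sum_add_distrib, hx, hαk']
    field_simp; norm_num
  · rw [Pi.smul_apply, smul_eq_mul, Pi.abs_apply, Real.le_sqrt (by positivity) (by positivity)]
    have : 0 ≤ (α i : ℝ) / k := by positivity
    nlinarith [sq_abs (x i)]
  · calc (orbitCard α)⁻¹ ≤ Real.exp k * ∏ i, ((α i : ℝ) / k) ^ α i := inv_orbitCard_le α
      _ ≤ Real.exp k * ∏ i, (2 * y i ^ 2) ^ α i := by
          gcongr with i
          rw [hy2]
          linarith [sq_nonneg (x i)]
      _ = (2 * Real.exp 1) ^ k * eval y (monomial (2 • α) (1 : ℝ)) := by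
          rw [eval_monomial_two_smul, mul_pow, ← Real.exp_one_pow]
          simp only [mul_pow, Finset.prod_mul_distrib, Finset.prod_pow_eq_pow_sum, hαk]
          ring

theorem stmt7 : ∃ C : ℝ, C > 0 ∧
    ∀ (n d : ℕ) (f : MvPolynomial (Fin n) ℝ)
      (g : (Fin n →₀ ℕ) → MvPolynomial (Fin n) ℝ),
      f.IsHomogeneous d → (∀ m, 0 ≤ coeff m f) → IsMLDecomp d f g →
      ∀ α : Fin n →₀ ℕ, mdeg α ≤ d / 2 →
        sphereNorm (g α) / (C ^ d * orbitCard α) ≤ sphereNorm f := by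
  refine ⟨4, by norm_num, fun n d f g _ hf hD α hα => ?_⟩
  have hK := orbitCard_pos α
  have hf0 := sphereNorm_nonneg f
  rw [div_le_iff₀ (by positivity)]
  refine sphereNorm_le (by positivity) fun x hx => ?_
  obtain ⟨y, hy, hy1, hxy, hyα⟩ := exists_sphere_point_inv_orbitCard_le α hx
  have hY := eval_monomial_two_smul_nonneg y α
  have key := hD.pow_mul_abs_eval_mul_le_sphereNorm hf hα hy hy1 (by norm_num) hxy
  set k := mdeg α
  set m := d - 2 * k
  set Y := eval y (monomial (2 • α) (1 : ℝ))
  have hconst : 2 ^ m * (2 * Real.exp 1) ^ k ≤ (4 : ℝ) ^ d := by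
    have h4 : (4 : ℝ) ^ d = 4 ^ m * 16 ^ k := by
      rw [show d = m + 2 * k by omega, pow_add, pow_mul]; norm_num
    rw [h4]
    gcongr
    · norm_num
    · linarith [Real.exp_one_lt_d9]
  calc |eval x (g α)| ≤ |eval x (g α)| * (orbitCard α * ((2 * Real.exp 1) ^ k * Y)) :=
        le_mul_of_one_le_right (abs_nonneg _) ((inv_le_iff_one_le_mul₀' hK).1 hyα)
    _ = 2 ^ m * (2 * Real.exp 1) ^ k * orbitCard α * ((1 / 2) ^ m * |eval x (g α)| * Y) := by
        rw [one_div, inv_pow]; field_simp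
    _ ≤ 4 ^ d * orbitCard α * sphereNorm f := by gcongr
    _ = sphereNorm f * (4 ^ d * orbitCard α) := by ring
end

section
/- There is an absolute constant C > 0 such that for every homogeneous polynomial f of degree d in n real variables, letting ‖f‖₂^c := sup over z ∈ ℂⁿ with ‖z‖₂ = 1 of |f(z)| (where f is evaluated at complex arguments via its real coefficients), one has ‖f‖₂^c · C^{−d} ≤ ‖f‖₂ ≤ ‖f‖₂^c. -/
open MvPolynomial

/-- `‖f‖₂^c = sup_{z ∈ ℂⁿ, ‖z‖₂ = 1} |f(z)|`, where `f` is evaluated at complex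
arguments via its real coefficients. -/
noncomputable def sphereNormC {n : ℕ} (f : MvPolynomial (Fin n) ℝ) : ℝ :=
  sSup {y | ∃ z : Fin n → ℂ, (∑ i, ‖z i‖ ^ 2) = 1 ∧
    y = ‖aeval z f‖}

open Finset

section Helpers

lemma aeval_ofReal' {n : ℕ} (f : MvPolynomial (Fin n) ℝ) (x : Fin n → ℝ) :
    aeval (fun i => (x i : ℂ)) f = ((eval x f : ℝ) : ℂ) := by
  have h := MvPolynomial.eval₂_comp_left (Complex.ofRealHom) (RingHom.id ℝ) x f
  rw [MvPolynomial.aeval_def]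
  rw [show MvPolynomial.eval x f = MvPolynomial.eval₂ (RingHom.id ℝ) x f from rfl]
  rw [show (algebraMap ℝ ℂ) = Complex.ofRealHom from rfl]
  rw [show ((MvPolynomial.eval₂ (RingHom.id ℝ) x f : ℝ) : ℂ) = Complex.ofRealHom (MvPolynomial.eval₂ (RingHom.id ℝ) x f) from rfl, h]
  rfl

lemma eval_smul_of_isHomogeneous {n d : ℕ} {f : MvPolynomial (Fin n) ℝ}
    (hf : f.IsHomogeneous d) (c : ℝ) (x : Fin n → ℝ) :
    eval (fun i => c * x i) f = c ^ d * eval x f := by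
  rw [eval_eq, eval_eq, Finset.mul_sum]
  refine Finset.sum_congr rfl fun m hm => ?_
  have hd : ∑ i ∈ m.support, m i = d := by
    have := hf (MvPolynomial.mem_support_iff.mp hm)
    simpa [Finsupp.weight, Finsupp.linearCombination, Finsupp.sum] using this
  calc coeff m f * ∏ i ∈ m.support, (c * x i) ^ m i
      = coeff m f * ((∏ i ∈ m.support, c ^ m i) * ∏ i ∈ m.support, x i ^ m i) := by
        rw [← Finset.prod_mul_distrib]; simp [mul_pow]
    _ = c ^ d * (coeff m f * ∏ i ∈ m.support, x i ^ m i) := by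
        rw [Finset.prod_pow_eq_pow_sum, hd]; ring


lemma eq_C_of_isHomogeneous_zero {n : ℕ} {f : MvPolynomial (Fin n) ℝ}
    (hf : f.IsHomogeneous 0) : f = C (coeff 0 f) := by
  ext m
  rcases eq_or_ne m 0 with rfl | hm
  · simp
  · rw [hf.coeff_eq_zero (by simpa [Finsupp.degree_eq_zero_iff] using hm)]
    rw [coeff_C, if_neg (Ne.symm hm)]

lemma degree_aeval_le {n d : ℕ} {f : MvPolynomial (Fin n) ℝ} (hf : f.IsHomogeneous d)
    (g : Fin n → Polynomial ℂ) (hg : ∀ i, (g i).degree ≤ 1) :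
    (MvPolynomial.aeval g f).degree ≤ (d : WithBot ℕ) := by
  rw [MvPolynomial.aeval_def, MvPolynomial.eval₂_eq]
  refine le_trans (Polynomial.degree_sum_le _ _) (Finset.sup_le fun m hm => ?_)
  have hd : ∑ i ∈ m.support, m i = d := by
    have := hf (MvPolynomial.mem_support_iff.mp hm)
    simpa [Finsupp.weight, Finsupp.linearCombination, Finsupp.sum] using this
  refine le_trans (Polynomial.degree_mul_le _ _) ?_
  have h1 : (algebraMap ℝ (Polynomial ℂ) (MvPolynomial.coeff m f)).degree ≤ 0 := by
    rw [Polynomial.algebraMap_apply]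
    exact Polynomial.degree_C_le
  have h2 : (∏ i ∈ m.support, g i ^ m i).degree ≤ (d : WithBot ℕ) := by
    refine le_trans (Polynomial.degree_prod_le _ _) ?_
    calc ∑ i ∈ m.support, (g i ^ m i).degree
        ≤ ∑ i ∈ m.support, (m i : WithBot ℕ) := by
          refine Finset.sum_le_sum fun i _ => ?_
          refine le_trans (Polynomial.degree_pow_le _ _) ?_
          calc (m i) • (g i).degree ≤ (m i) • (1 : WithBot ℕ) :=
                nsmul_le_nsmul_right (hg i) _
            _ = (m i : WithBot ℕ) := by
                simp [nsmul_eq_mul, mul_one]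
      _ = (d : WithBot ℕ) := by rw [← hd]; push_cast; rfl
  calc (algebraMap ℝ (Polynomial ℂ) (MvPolynomial.coeff m f)).degree
        + (∏ i ∈ m.support, g i ^ m i).degree
      ≤ 0 + (d : WithBot ℕ) := add_le_add h1 h2
    _ = (d : WithBot ℕ) := zero_add _

lemma eval_aeval {n : ℕ} (f : MvPolynomial (Fin n) ℝ) (g : Fin n → Polynomial ℂ) (w : ℂ) :
    (MvPolynomial.aeval g f).eval w
      = MvPolynomial.aeval (fun i => (g i).eval w) f := by
  have h := MvPolynomial.comp_aeval (f := g)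
    (φ := ((Polynomial.aeval w : Polynomial ℂ →ₐ[ℂ] ℂ).restrictScalars ℝ))
  have h2 := congrArg (fun ψ => ψ f) h
  simpa [Polynomial.coe_aeval_eq_eval] using h2

lemma pow_self_le_three_pow_mul_factorial : ∀ d : ℕ, (d:ℝ) ^ d ≤ 3 ^ d * d.factorial := by
  intro d
  induction d with
  | zero => norm_num
  | succ k ih =>
    rcases Nat.eq_zero_or_pos k with rfl | hk
    · norm_num
    · have hk' : (0:ℝ) < k := by exact_mod_cast hk
      have h1 : ((k:ℝ) + 1) ^ k ≤ 3 * (k:ℝ) ^ k := by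
        have he : (1 + 1/(k:ℝ)) ^ k ≤ 3 := by
          have h2 : (1 : ℝ) + 1/(k:ℝ) ≤ Real.exp (1/(k:ℝ)) := by
            have := Real.add_one_le_exp (1/(k:ℝ)); linarith
          have h3 : ((1:ℝ) + 1/(k:ℝ)) ^ k ≤ Real.exp (1/(k:ℝ)) ^ k := by
            apply pow_le_pow_left₀ (by positivity) h2
          have h4 : Real.exp (1/(k:ℝ)) ^ k = Real.exp 1 := by
            rw [← Real.exp_nat_mul]
            congr 1
            field_simp
          have h5 : Real.exp 1 ≤ 3 := by
            have := Real.exp_one_lt_d9; linarith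
          calc ((1:ℝ) + 1/(k:ℝ)) ^ k ≤ Real.exp (1/(k:ℝ)) ^ k := h3
            _ = Real.exp 1 := h4
            _ ≤ 3 := h5
        have heq : ((k:ℝ) + 1) ^ k = (1 + 1/(k:ℝ)) ^ k * (k:ℝ) ^ k := by
          rw [← mul_pow]
          congr 1
          field_simp
        rw [heq]
        have : (0:ℝ) ≤ (k:ℝ)^k := by positivity
        nlinarith [pow_nonneg (le_of_lt hk') k]
      have hfac : ((k+1).factorial : ℝ) = ((k:ℝ)+1) * k.factorial := by
        rw [Nat.factorial_succ]; push_cast; ring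
      push_cast
      calc ((k:ℝ)+1) ^ (k+1) = ((k:ℝ)+1) * ((k:ℝ)+1)^k := by ring
        _ ≤ ((k:ℝ)+1) * (3 * (k:ℝ)^k) := by
            apply mul_le_mul_of_nonneg_left h1 (by positivity)
        _ ≤ ((k:ℝ)+1) * (3 * (3^k * k.factorial)) := by
            have h0 : (0:ℝ) ≤ 3 := by norm_num
            have := mul_le_mul_of_nonneg_left ih h0
            apply mul_le_mul_of_nonneg_left this (by positivity)
        _ = 3 ^ (k+1) * (((k:ℝ)+1) * k.factorial) := by ring
        _ = 3 ^ (k+1) * ((k+1).factorial : ℝ) := by rw [hfac]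

lemma choose_le_two_pow' (d j : ℕ) (hj : j ≤ d) : d.choose j ≤ 2 ^ d := by
  calc d.choose j ≤ ∑ m ∈ range (d+1), d.choose m :=
        Finset.single_le_sum (f := fun m => d.choose m) (fun m _ => Nat.zero_le _)
          (Finset.mem_range.mpr (Nat.lt_succ_of_le hj))
    _ = 2 ^ d := Nat.sum_range_choose d

lemma prod_erase_abs_sub (d j : ℕ) (hj : j < d + 1) :
    ∏ k ∈ (range (d+1)).erase j, |(j:ℝ) - (k:ℝ)|
      = (j.factorial : ℝ) * ((d - j).factorial : ℝ) := by
  have hsplit : (range (d+1)).erase j = range j ∪ Ico (j+1) (d+1) := by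
    ext k
    simp only [mem_erase, mem_range, mem_union, mem_Ico]
    omega
  have hdisj : Disjoint (range j) (Ico (j+1) (d+1)) := by
    rw [Finset.disjoint_left]
    intro k hk hk'
    simp only [mem_range] at hk
    simp only [mem_Ico] at hk'
    omega
  rw [hsplit, Finset.prod_union hdisj]
  have h1 : ∏ k ∈ range j, |(j:ℝ) - (k:ℝ)| = (j.factorial : ℝ) := by
    have : ∀ k ∈ range j, |(j:ℝ) - (k:ℝ)| = ((j - k : ℕ) : ℝ) := by
      intro k hk
      have hk' : k < j := mem_range.mp hk
      rw [abs_of_nonneg (sub_nonneg.mpr (by exact_mod_cast hk'.le))]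
      push_cast [Nat.cast_sub hk'.le]
      ring
    rw [Finset.prod_congr rfl this, ← Nat.cast_prod]
    congr 1
    rw [← Nat.descFactorial_eq_prod_range j j]
    exact (Nat.descFactorial_self j)
  have h2 : ∏ k ∈ Ico (j+1) (d+1), |(j:ℝ) - (k:ℝ)| = ((d-j).factorial : ℝ) := by
    rw [Finset.prod_Ico_eq_prod_range]
    have : ∀ i ∈ range (d+1-(j+1)), |(j:ℝ) - ((j+1+i : ℕ):ℝ)| = ((i+1 : ℕ) : ℝ) := by
      intro i _
      push_cast
      rw [abs_of_nonpos (by linarith)]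
      ring
    rw [Finset.prod_congr rfl this, ← Nat.cast_prod]
    have hr : d + 1 - (j+1) = d - j := by omega
    rw [hr]
    congr 1
    induction (d - j) with
    | zero => simp
    | succ m ih => rw [Finset.prod_range_succ, ih, Nat.factorial_succ]; ring_nf
  rw [h1, h2]

lemma unit_vec_sum {n : ℕ} (hn : 0 < n) :
    (∑ i : Fin n, (if i = (⟨0, hn⟩ : Fin n) then (1:ℝ) else 0) ^ 2) = 1 := by
  rw [Finset.sum_eq_single (⟨0, hn⟩ : Fin n)]
  · simp
  · intro b _ hb; simp [hb]
  · simp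


lemma pointwise_bound {n d : ℕ} (hn : 0 < n) {f : MvPolynomial (Fin n) ℝ}
    (hf : f.IsHomogeneous d) {M : ℝ}
    (hmem : ∀ u : Fin n → ℝ, (∑ i, u i ^ 2) = 1 → |eval u f| ≤ M)
    (v : Fin n → ℝ) : |eval v f| ≤ M * Real.sqrt (∑ i, v i ^ 2) ^ d := by
  have hM : 0 ≤ M := le_trans (abs_nonneg _) (hmem _ (unit_vec_sum hn))
  set r := Real.sqrt (∑ i, v i ^ 2) with hr
  have hsum : (0:ℝ) ≤ ∑ i, v i ^ 2 := Finset.sum_nonneg fun i _ => sq_nonneg _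
  have hr0 : 0 ≤ r := Real.sqrt_nonneg _
  have hr2 : r ^ 2 = ∑ i, v i ^ 2 := Real.sq_sqrt hsum
  rcases eq_or_ne r 0 with h0 | hne
  · -- v = 0
    have hv : ∀ i, v i = 0 := by
      intro i
      have : ∑ i, v i ^ 2 = 0 := by rw [← hr2, h0]; ring
      have hle : v i ^ 2 ≤ 0 := by
        rw [← this]
        exact Finset.single_le_sum (f := fun j => v j ^ 2) (fun j _ => sq_nonneg _)
          (Finset.mem_univ i)
      nlinarith [sq_nonneg (v i)]
    have hveq : v = fun _ => (0:ℝ) := funext hv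
    cases d with
    | zero =>
      have hfc := eq_C_of_isHomogeneous_zero hf
      have h1 : |eval v f| = |coeff 0 f| := by rw [hfc]; simp
      have h2 : |coeff 0 f| ≤ M := by
        have := hmem _ (unit_vec_sum hn)
        rwa [hfc, eval_C] at this
      simpa [h1] using h2
    | succ k =>
      have : eval v f = 0 := by
        rw [hveq]
        have : (fun _ : Fin n => (0:ℝ)) = fun i => (0:ℝ) * (fun _ => (0:ℝ)) i := by
          funext i; ring
        rw [this, eval_smul_of_isHomogeneous hf]
        simp
      rw [this]
      simp only [abs_zero]
      positivity
  · have hrpos : 0 < r := lt_of_le_of_ne hr0 (Ne.symm hne)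
    set u : Fin n → ℝ := fun i => r⁻¹ * v i with hu
    have husum : (∑ i, u i ^ 2) = 1 := by
      simp only [hu, mul_pow, ← Finset.mul_sum]
      rw [← hr2]
      field_simp
    have hvu : v = fun i => r * u i := by
      funext i; simp [hu]; field_simp
    rw [hvu, eval_smul_of_isHomogeneous hf, abs_mul, abs_pow, abs_of_nonneg hr0]
    calc r ^ d * |eval u f| ≤ r ^ d * M :=
          mul_le_mul_of_nonneg_left (hmem u husum) (by positivity)
      _ = M * r ^ d := mul_comm _ _

lemma abs_aeval_le {n : ℕ} (f : MvPolynomial (Fin n) ℝ) (z : Fin n → ℂ)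
    (hz : ∀ i, ‖z i‖ ≤ 1) :
    ‖aeval z f‖ ≤ ∑ m ∈ f.support, |coeff m f| := by
  rw [aeval_def, eval₂_eq]
  refine le_trans (norm_sum_le _ _) (Finset.sum_le_sum fun m _ => ?_)
  rw [norm_mul]
  have h1 : ‖algebraMap ℝ ℂ (coeff m f)‖ = |coeff m f| := by
    simp [Complex.norm_real]
  rw [h1]
  have h2 : ‖∏ i ∈ m.support, z i ^ m i‖ ≤ 1 := by
    rw [norm_prod]
    refine Finset.prod_le_one (fun i _ => by positivity) (fun i _ => ?_)
    rw [norm_pow]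
    exact pow_le_one₀ (norm_nonneg _) (hz i)
  calc |coeff m f| * ‖∏ i ∈ m.support, z i ^ m i‖
      ≤ |coeff m f| * 1 := by
        exact mul_le_mul_of_nonneg_left h2 (abs_nonneg _)
    _ = |coeff m f| := mul_one _


lemma abs_le_one_of_sum_sq {n : ℕ} (z : Fin n → ℂ)
    (hz : ∑ i, ‖z i‖ ^ 2 = 1) (i : Fin n) : ‖z i‖ ≤ 1 := by
  have h : ‖z i‖ ^ 2 ≤ 1 := by
    rw [← hz]
    exact Finset.single_le_sum (f := fun j => ‖z j‖ ^ 2) (fun j _ => by positivity) (Finset.mem_univ i)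
  nlinarith [norm_nonneg (z i)]


lemma setC_bddAbove {n : ℕ} (f : MvPolynomial (Fin n) ℝ) :
    BddAbove {y | ∃ z : Fin n → ℂ, (∑ i, ‖z i‖ ^ 2) = 1 ∧
      y = ‖aeval z f‖} := by
  refine ⟨∑ m ∈ f.support, |coeff m f|, fun y hy => ?_⟩
  obtain ⟨z, hz, rfl⟩ := hy
  exact abs_aeval_le f z (abs_le_one_of_sum_sq z hz)


lemma real_subset_complex {n : ℕ} (f : MvPolynomial (Fin n) ℝ) :
    {y | ∃ x : Fin n → ℝ, (∑ i, x i ^ 2) = 1 ∧ y = |eval x f|} ⊆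
    {y | ∃ z : Fin n → ℂ, (∑ i, ‖z i‖ ^ 2) = 1 ∧
      y = ‖aeval z f‖} := by
  rintro y ⟨x, hx, rfl⟩
  refine ⟨fun i => (x i : ℂ), by simpa [Complex.norm_real, Real.norm_eq_abs, sq_abs] using hx, ?_⟩
  have h := MvPolynomial.eval₂_comp_left (Complex.ofRealHom) (RingHom.id ℝ) x f
  rw [show (aeval fun i => ((x i : ℝ) : ℂ)) f = ((eval x f : ℝ) : ℂ) from ?_]
  · rw [Complex.norm_real, Real.norm_eq_abs]
  · rw [MvPolynomial.aeval_def]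
    rw [show MvPolynomial.eval x f = MvPolynomial.eval₂ (RingHom.id ℝ) x f from rfl]
    rw [show (algebraMap ℝ ℂ) = Complex.ofRealHom from rfl]
    rw [show ((MvPolynomial.eval₂ (RingHom.id ℝ) x f : ℝ) : ℂ) = Complex.ofRealHom (MvPolynomial.eval₂ (RingHom.id ℝ) x f) from rfl, h]
    rfl

end Helpers

lemma key_bound {n d : ℕ} (hn : 0 < n) {f : MvPolynomial (Fin n) ℝ}
    (hf : f.IsHomogeneous d) {M : ℝ}
    (hmem : ∀ u : Fin n → ℝ, (∑ i, u i ^ 2) = 1 → |eval u f| ≤ M)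
    (z : Fin n → ℂ) (hz : ∑ i, ‖z i‖ ^ 2 = 1) :
    ‖MvPolynomial.aeval z f‖ ≤ 100 ^ d * M := by
  have hM : 0 ≤ M := le_trans (abs_nonneg _) (hmem _ (unit_vec_sum hn))
  rcases Nat.eq_zero_or_pos d with rfl | hd
  · have hfc := eq_C_of_isHomogeneous_zero hf
    have h1 : MvPolynomial.aeval z f = algebraMap ℝ ℂ (coeff 0 f) := by
      rw [hfc]; simp
    rw [h1]
    have h3 : ‖algebraMap ℝ ℂ (coeff 0 f)‖ = |coeff 0 f| := by
      simp [Complex.norm_real]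
    rw [h3, pow_zero, one_mul]
    have h2 := hmem _ (unit_vec_sum hn)
    rwa [hfc, eval_C] at h2
  · have hd0 : (d:ℝ) ≠ 0 := by positivity
    have hdC : (d:ℂ) ≠ 0 := by exact_mod_cast hd.ne'
    set x : Fin n → ℝ := fun i => (z i).re with hxdef
    set y : Fin n → ℝ := fun i => (z i).im with hydef
    have hsq : ∀ i, ‖z i‖ ^ 2 = x i ^ 2 + y i ^ 2 := fun i => by
      rw [Complex.sq_norm, Complex.normSq_apply]; ring
    have hxy : (∑ i, x i ^ 2) + (∑ i, y i ^ 2) = 1 := by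
      rw [← Finset.sum_add_distrib, ← hz]
      exact Finset.sum_congr rfl fun i _ => (hsq i).symm
    have hxnn : (0:ℝ) ≤ ∑ i, x i ^ 2 := Finset.sum_nonneg fun i _ => sq_nonneg _
    have hynn : (0:ℝ) ≤ ∑ i, y i ^ 2 := Finset.sum_nonneg fun i _ => sq_nonneg _
    have hx1 : (∑ i, x i ^ 2) ≤ 1 := by linarith
    have hy1 : (∑ i, y i ^ 2) ≤ 1 := by linarith
    have hCS : (∑ i, x i * y i) ^ 2 ≤ 1 := by
      have h := Finset.sum_mul_sq_le_sq_mul_sq Finset.univ x y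
      have : (∑ i, x i ^ 2) * (∑ i, y i ^ 2) ≤ 1 := by nlinarith
      calc (∑ i, x i * y i)^2 ≤ (∑ i, x i ^ 2) * (∑ i, y i ^ 2) := h
        _ ≤ 1 := this
    have hnode : ∀ t : ℝ, 0 ≤ t → t ≤ 1 →
        |eval (fun i => x i + t * y i) f| ≤ M * 2 ^ d := by
      intro t ht0 ht1
      have hexp : (∑ i, (x i + t * y i) ^ 2)
          = (∑ i, x i ^ 2) + 2 * t * (∑ i, x i * y i) + t ^ 2 * (∑ i, y i ^ 2) := by
        rw [Finset.mul_sum, Finset.mul_sum, ← Finset.sum_add_distrib,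
          ← Finset.sum_add_distrib]
        exact Finset.sum_congr rfl fun i _ => by ring
      have hS : (∑ i, (x i + t * y i) ^ 2) ≤ 4 := by
        have h1 : 2 * t * (∑ i, x i * y i) ≤ 2 := by nlinarith [sq_nonneg ((∑ i, x i * y i) - 1), sq_nonneg ((∑ i, x i * y i) + 1)]
        have h2 : t ^ 2 * (∑ i, y i ^ 2) ≤ 1 := by nlinarith
        linarith
      refine le_trans (pointwise_bound hn hf hmem _) ?_
      have h2 : Real.sqrt (∑ i, (x i + t * y i) ^ 2) ≤ 2 := by
        rw [show (2:ℝ) = Real.sqrt 4 by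
          rw [show (4:ℝ) = 2^2 by norm_num, Real.sqrt_sq (by norm_num)]]
        exact Real.sqrt_le_sqrt hS
      exact mul_le_mul_of_nonneg_left
        (pow_le_pow_left₀ (Real.sqrt_nonneg _) h2 d) hM
    set g : Fin n → Polynomial ℂ :=
      fun i => Polynomial.C (x i : ℂ) + Polynomial.C (y i : ℂ) * Polynomial.X with hgdef
    set p : Polynomial ℂ := MvPolynomial.aeval g f with hpdef
    have hgdeg : ∀ i, (g i).degree ≤ 1 := by
      intro i
      refine le_trans (Polynomial.degree_add_le _ _) (max_le ?_ ?_)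
      · exact le_trans Polynomial.degree_C_le (by norm_num)
      · refine le_trans (Polynomial.degree_mul_le _ _) ?_
        calc (Polynomial.C (y i : ℂ)).degree + (Polynomial.X : Polynomial ℂ).degree
            ≤ 0 + 1 := add_le_add Polynomial.degree_C_le (le_of_eq Polynomial.degree_X)
          _ = 1 := zero_add _
    have hpdeg : p.degree < ((range (d+1)).card : ℕ) := by
      rw [Finset.card_range]
      refine lt_of_le_of_lt (degree_aeval_le hf g hgdeg) ?_
      exact_mod_cast Nat.lt_succ_self d
    set vno : ℕ → ℂ := fun k => (k:ℂ) / (d:ℂ) with hvdef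
    have hinj : Set.InjOn vno (range (d+1)) := by
      intro a _ b _ h
      simp only [hvdef] at h
      field_simp at h
      exact_mod_cast h
    have hinterp := Lagrange.eq_interpolate (v := vno) hinj hpdeg
    have heI : p.eval Complex.I = ∑ j ∈ range (d+1), p.eval (vno j) *
        ∏ k ∈ (range (d+1)).erase j, ((vno j - vno k)⁻¹ * (Complex.I - vno k)) := by
      conv_lhs => rw [hinterp]
      rw [Lagrange.interpolate_apply, Polynomial.eval_finset_sum]
      refine Finset.sum_congr rfl fun j hj => ?_
      rw [Polynomial.eval_mul, Polynomial.eval_C, Lagrange.basis, Polynomial.eval_prod]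
      congr 1
      refine Finset.prod_congr rfl fun k hk => ?_
      simp [Lagrange.basisDivisor]
    have hpI : p.eval Complex.I = MvPolynomial.aeval z f := by
      rw [hpdef, eval_aeval]
      have hfun : (fun i => Polynomial.eval Complex.I (g i)) = z := by
        funext i
        simp only [hgdef, Polynomial.eval_add, Polynomial.eval_mul, Polynomial.eval_C,
          Polynomial.eval_X]
        exact Complex.re_add_im (z i)
      rw [hfun]
    have hpt : ∀ j ∈ range (d+1), ‖p.eval (vno j)‖ ≤ M * 2 ^ d := by
      intro j hj
      have ht0 : (0:ℝ) ≤ (j:ℝ)/d := by positivity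
      have ht1 : (j:ℝ)/d ≤ 1 := by
        rw [div_le_one (by exact_mod_cast hd)]
        exact_mod_cast Nat.lt_succ_iff.mp (mem_range.mp hj)
      have hpv : p.eval (vno j)
          = ((eval (fun i => x i + ((j:ℝ)/d) * y i) f : ℝ) : ℂ) := by
        rw [hpdef, eval_aeval, ← aeval_ofReal']
        have hfun : (fun i => Polynomial.eval (vno j) (g i))
            = fun i => ((x i + (j:ℝ)/(d:ℝ) * y i : ℝ) : ℂ) := by
          funext i
          simp only [hgdef, hvdef, Polynomial.eval_add, Polynomial.eval_mul,
            Polynomial.eval_C, Polynomial.eval_X]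
          push_cast
          ring
        rw [hfun]
      rw [hpv, Complex.norm_real, Real.norm_eq_abs]
      exact hnode _ ht0 ht1
    have habs : ∀ j k : ℕ, ‖vno j - vno k‖ = |(j:ℝ) - (k:ℝ)| / d := by
      intro j k
      have h : vno j - vno k = ((((j:ℝ) - (k:ℝ))/(d:ℝ) : ℝ) : ℂ) := by
        simp only [hvdef]; push_cast; ring
      rw [h, Complex.norm_real, Real.norm_eq_abs, abs_div, abs_of_nonneg (by positivity : (0:ℝ) ≤ (d:ℝ))]
    have hden : ∀ j ∈ range (d+1),
        (∏ k ∈ (range (d+1)).erase j, ‖vno j - vno k‖)⁻¹ ≤ 6 ^ d := by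
      intro j hj
      have hjd : j ≤ d := Nat.lt_succ_iff.mp (mem_range.mp hj)
      have hcard : ((range (d+1)).erase j).card = d := by
        rw [Finset.card_erase_of_mem hj, Finset.card_range]; omega
      have hprod : ∏ k ∈ (range (d+1)).erase j, ‖vno j - vno k‖
          = ((j.factorial : ℝ) * ((d-j).factorial : ℝ)) / (d:ℝ)^d := by
        rw [Finset.prod_congr rfl (fun k _ => habs j k), Finset.prod_div_distrib,
          prod_erase_abs_sub d j (mem_range.mp hj), Finset.prod_const, hcard]
      rw [hprod, inv_div, div_le_iff₀ (by positivity)]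
      have hfac : (d.factorial : ℝ) ≤ 2^d * ((j.factorial : ℝ) * ((d-j).factorial : ℝ)) := by
        have h := Nat.choose_mul_factorial_mul_factorial hjd
        have hc := choose_le_two_pow' d j hjd
        have heq : (d.factorial:ℝ) = (d.choose j : ℝ) * ((j.factorial:ℝ) * ((d-j).factorial:ℝ)) := by
          rw [← Nat.cast_mul, ← Nat.cast_mul, ← mul_assoc, h]
        rw [heq]
        exact mul_le_mul_of_nonneg_right (by exact_mod_cast hc) (by positivity)
      calc (d:ℝ)^d ≤ 3^d * d.factorial := pow_self_le_three_pow_mul_factorial d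
        _ ≤ 3^d * (2^d * ((j.factorial:ℝ) * ((d-j).factorial:ℝ))) :=
            mul_le_mul_of_nonneg_left hfac (by positivity)
        _ = 6^d * ((j.factorial:ℝ) * ((d-j).factorial:ℝ)) := by
            rw [show (6:ℝ)^d = 3^d * 2^d by rw [← mul_pow]; norm_num]
            ring
    have hnum : ∀ j ∈ range (d+1),
        ∏ k ∈ (range (d+1)).erase j, ‖Complex.I - vno k‖ ≤ 2 ^ d := by
      intro j hj
      have hcard : ((range (d+1)).erase j).card = d := by
        rw [Finset.card_erase_of_mem hj, Finset.card_range]; omega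
      calc ∏ k ∈ (range (d+1)).erase j, ‖Complex.I - vno k‖
          ≤ ∏ _k ∈ (range (d+1)).erase j, (2:ℝ) := by
            refine Finset.prod_le_prod (fun k _ => norm_nonneg _) fun k hk => ?_
            have hk' : k ≤ d := Nat.lt_succ_iff.mp (mem_range.mp (Finset.mem_of_mem_erase hk))
            have h1 : ‖vno k‖ ≤ 1 := by
              have : vno k = (((k:ℝ)/(d:ℝ) : ℝ) : ℂ) := by simp only [hvdef]; push_cast; rfl
              rw [this, Complex.norm_real, Real.norm_eq_abs, abs_div,
                abs_of_nonneg (by positivity : (0:ℝ) ≤ (k:ℝ)),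
                abs_of_nonneg (by positivity : (0:ℝ) ≤ (d:ℝ)),
                div_le_one (by positivity)]
              exact_mod_cast hk'
            calc ‖Complex.I - vno k‖
                ≤ ‖Complex.I‖ + ‖vno k‖ := by
                  rw [sub_eq_add_neg]
                  refine le_trans (norm_add_le _ _) ?_
                  rw [norm_neg]
              _ ≤ 1 + 1 := by rw [Complex.norm_I]; linarith
              _ = 2 := by norm_num
        _ = 2 ^ d := by rw [Finset.prod_const, hcard]
    rw [← hpI, heI]
    have hterm : ∀ j ∈ range (d+1),
        ‖p.eval (vno j) *
          ∏ k ∈ (range (d+1)).erase j, ((vno j - vno k)⁻¹ * (Complex.I - vno k))‖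
          ≤ (M * 2^d) * (6^d * 2^d) := by
      intro j hj
      rw [norm_mul, norm_prod]
      have hsplit : ∏ k ∈ (range (d+1)).erase j,
          ‖(vno j - vno k)⁻¹ * (Complex.I - vno k)‖
          = (∏ k ∈ (range (d+1)).erase j, ‖vno j - vno k‖)⁻¹ *
            ∏ k ∈ (range (d+1)).erase j, ‖Complex.I - vno k‖ := by
        rw [← Finset.prod_inv_distrib, ← Finset.prod_mul_distrib]
        exact Finset.prod_congr rfl fun k _ => by rw [norm_mul, norm_inv]
      rw [hsplit]
      have h1 : (0:ℝ) ≤ (∏ k ∈ (range (d+1)).erase j, ‖vno j - vno k‖)⁻¹ := by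
        positivity
      have h2 : (0:ℝ) ≤ ∏ k ∈ (range (d+1)).erase j, ‖Complex.I - vno k‖ := by
        positivity
      refine mul_le_mul (hpt j hj) ?_ (by positivity) (by positivity)
      exact mul_le_mul (hden j hj) (hnum j hj) h2 (by positivity)
    calc ‖∑ j ∈ range (d+1), p.eval (vno j) *
          ∏ k ∈ (range (d+1)).erase j, ((vno j - vno k)⁻¹ * (Complex.I - vno k))‖
        ≤ ∑ j ∈ range (d+1), ‖p.eval (vno j) *
          ∏ k ∈ (range (d+1)).erase j, ((vno j - vno k)⁻¹ * (Complex.I - vno k))‖ :=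
          norm_sum_le _ _
      _ ≤ ∑ _j ∈ range (d+1), (M * 2^d) * (6^d * 2^d) :=
          Finset.sum_le_sum hterm
      _ = (d+1 : ℝ) * ((M * 2^d) * (6^d * 2^d)) := by
          rw [Finset.sum_const, Finset.card_range, nsmul_eq_mul]
          push_cast; ring
      _ ≤ (2:ℝ)^d * ((M * 2^d) * (6^d * 2^d)) := by
          have h : (d+1 : ℝ) ≤ 2^d := by
            exact_mod_cast Nat.lt_two_pow_self (n := d)
          exact mul_le_mul_of_nonneg_right h (by positivity)
      _ = M * 48^d := by
          rw [show (48:ℝ)^d = 2^d * (2^d * (6^d * 2^d)) by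
            rw [← mul_pow, ← mul_pow, ← mul_pow]; norm_num]
          ring
      _ ≤ 100^d * M := by
          have h : (48:ℝ)^d ≤ 100^d := pow_le_pow_left₀ (by norm_num) (by norm_num) d
          nlinarith

theorem stmt13 : ∃ C : ℝ, C > 0 ∧
    ∀ (n d : ℕ) (f : MvPolynomial (Fin n) ℝ), f.IsHomogeneous d →
      sphereNormC f * (C ^ d)⁻¹ ≤ sphereNorm f ∧ sphereNorm f ≤ sphereNormC f := by
  refine ⟨100, by norm_num, fun n d f hf => ?_⟩
  rcases Nat.eq_zero_or_pos n with rfl | hn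
  · have h1 : {y | ∃ x : Fin 0 → ℝ, (∑ i, x i ^ 2) = 1 ∧ y = |eval x f|} = ∅ := by
      ext y
      simp only [Set.mem_setOf_eq, Set.mem_empty_iff_false, iff_false, not_exists]
      intro x hx
      simp at hx
    have h2 : {y | ∃ z : Fin 0 → ℂ, (∑ i, ‖z i‖ ^ 2) = 1 ∧
        y = ‖aeval z f‖} = ∅ := by
      ext y
      simp only [Set.mem_setOf_eq, Set.mem_empty_iff_false, iff_false, not_exists]
      intro z hz
      simp at hz
    unfold sphereNorm sphereNormC
    rw [h1, h2, Real.sSup_empty]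
    norm_num
  · have hbddC := setC_bddAbove f
    have hbddR := hbddC.mono (real_subset_complex f)
    have hmem : ∀ u : Fin n → ℝ, (∑ i, u i ^ 2) = 1 → |eval u f| ≤ sphereNorm f :=
      fun u hu => le_csSup hbddR ⟨u, hu, rfl⟩
    have hM : (0:ℝ) ≤ sphereNorm f :=
      le_trans (abs_nonneg _) (hmem _ (unit_vec_sum hn))
    have hne : {y | ∃ x : Fin n → ℝ, (∑ i, x i ^ 2) = 1 ∧ y = |eval x f|}.Nonempty :=
      ⟨_, _, unit_vec_sum hn, rfl⟩
    constructor
    · have hC : sphereNormC f ≤ 100 ^ d * sphereNorm f := by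
        apply Real.sSup_le
        · rintro y ⟨z, hz, rfl⟩
          exact key_bound hn hf hmem z hz
        · positivity
      have hpow : (0:ℝ) < 100 ^ d := by positivity
      rw [← div_eq_mul_inv, div_le_iff₀ hpow]
      linarith [hC]
    · exact csSup_le_csSup hbddC hne (real_subset_complex f)
end
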